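/- (Sontag's lemma on 𝒦𝓛-estimates) For each 𝒦𝓛-function β and each λ ≥ 0, there exist φ₁, φ₂ ∈ 𝒦∞ with φ₁ locally Lipschitz such that φ₁(β(s, t)) ≤ φ₂(s) e^{−λ t} for all s, t ≥ 0. -/

import Mathlib

noncomputable section
open Set Filter

def IsKFun (α : ℝ → ℝ) : Prop :=
  ContinuousOn α (Set.Ici 0) ∧ StrictMonoOn α (Set.Ici 0) ∧ α 0 = 0

def IsKInfFun (α : ℝ → ℝ) : Prop :=
  IsKFun α ∧ Filter.Tendsto α Filter.atTop Filter.atTop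

def IsKLFun (β : ℝ → ℝ → ℝ) : Prop :=
  (∀ t ≥ (0:ℝ), IsKFun (fun s => β s t)) ∧
  (∀ s > (0:ℝ), ContinuousOn (β s) (Set.Ici 0) ∧ StrictAntiOn (β s) (Set.Ici 0) ∧
    Filter.Tendsto (β s) Filter.atTop (nhds 0))

/-!
A 𝒦𝓛 function is dominated by a product `β s t ≤ a s * ω t`, with `a` nondecreasing and
`ω ≤ 1` a positive envelope decaying to `0` (a weighted sum of the truncations of `β (n + 1) ·`).
With `T r` the last time at which `ω ≥ r`, we have `t ≤ T (ω t)`; so the primitive `φ` of a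
density of the shape `u ↦ inf_n b_n * exp (-λ T (u / (n + 1)))` is a 1-Lipschitz 𝒦∞ function
with `φ (c * ω t) ≤ C c * exp (-λ t)`. Replacing `C ∘ a` by a continuous nondecreasing majorant
`K` gives `φ (β s t) ≤ K s * exp (-λ t)`, and multiplying by `φ (β s t) ≤ φ (β s 0)` restores
the behaviour at `s = 0`: take `φ₁ = φ²` and `φ₂ s = φ (β s 0) * K s + s`.
-/

open Topology

namespace IsKFun

variable {α γ : ℝ → ℝ}

lemma nonneg (hα : IsKFun α) {x : ℝ} (hx : 0 ≤ x) : 0 ≤ α x := by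
  simpa [hα.2.2] using hα.2.1.monotoneOn self_mem_Ici hx hx

lemma comp (hα : IsKFun α) (hγ : IsKFun γ) : IsKFun (α ∘ γ) := by
  have hmaps : MapsTo γ (Ici 0) (Ici 0) := fun x hx => hγ.nonneg hx
  exact ⟨hα.1.comp hγ.1 hmaps, hα.2.1.comp hγ.2.1 hmaps, by simp [hγ.2.2, hα.2.2]⟩

end IsKFun

lemma IsKInfFun.mul_self {α : ℝ → ℝ} (hα : IsKInfFun α) : IsKInfFun fun x => α x * α x :=
  ⟨⟨hα.1.1.mul hα.1.1,
    fun _ hx _ hy hxy => mul_self_lt_mul_self (hα.1.nonneg hx) (hα.1.2.1 hx hy hxy),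
    by simp [hα.1.2.2]⟩,
   hα.2.atTop_mul_atTop₀ hα.2⟩

lemma isKInfFun_mul_add_id {f g : ℝ → ℝ} (hf : IsKFun f) (hgc : ContinuousOn g (Ici 0))
    (hgm : MonotoneOn g (Ici 0)) (hg0 : ∀ x ≥ (0:ℝ), 0 ≤ g x) :
    IsKInfFun fun s => f s * g s + s := by
  refine ⟨⟨(hf.1.mul hgc).add continuousOn_id, fun x hx y hy hxy => ?_, by simp [hf.2.2]⟩, ?_⟩
  · have := mul_le_mul (hf.2.1.monotoneOn hx hy hxy.le) (hgm hx hy hxy.le) (hg0 x hx)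
      (hf.nonneg hy)
    linarith
  · refine tendsto_atTop_mono' atTop ?_ tendsto_id
    filter_upwards [eventually_ge_atTop 0] with s hs
    have := mul_nonneg (hf.nonneg hs) (hg0 s hs)
    simp only [id]
    linarith

namespace IsKLFun

variable {β : ℝ → ℝ → ℝ} (hβ : IsKLFun β)
include hβ

lemma zero_left {t : ℝ} (ht : 0 ≤ t) : β 0 t = 0 := (hβ.1 t ht).2.2

lemma nonneg {s t : ℝ} (hs : 0 ≤ s) (ht : 0 ≤ t) : 0 ≤ β s t := (hβ.1 t ht).nonneg hs

lemma pos {s t : ℝ} (hs : 0 < s) (ht : 0 ≤ t) : 0 < β s t := by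
  simpa [hβ.zero_left ht] using (hβ.1 t ht).2.1 self_mem_Ici hs.le hs

lemma mono_left {s₁ s₂ t : ℝ} (hs₁ : 0 ≤ s₁) (h : s₁ ≤ s₂) (ht : 0 ≤ t) : β s₁ t ≤ β s₂ t :=
  (hβ.1 t ht).2.1.monotoneOn hs₁ (hs₁.trans h) h

lemma le_zero_right {s t : ℝ} (hs : 0 ≤ s) (ht : 0 ≤ t) : β s t ≤ β s 0 := by
  rcases hs.eq_or_lt with rfl | hs
  · rw [hβ.zero_left ht, hβ.zero_left le_rfl]
  · exact (hβ.2 s hs).2.1.antitoneOn self_mem_Ici ht ht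

end IsKLFun

def decayEnvelope (f : ℕ → ℝ → ℝ) (t : ℝ) : ℝ := ∑' n : ℕ, (1 / 2 : ℝ) ^ (n + 1) * min (f n t) 1

section decayEnvelope

lemma half_pow_succ_mul_min_le (n : ℕ) (x : ℝ) :
    (1 / 2 : ℝ) ^ (n + 1) * min x 1 ≤ 1 / 2 * (1 / 2) ^ n := by
  rw [← pow_succ']
  exact mul_le_of_le_one_right (by positivity) (min_le_right _ _)

variable {f : ℕ → ℝ → ℝ} (hf : ∀ n, ∀ t ≥ (0:ℝ), 0 ≤ f n t)
include hf

lemma summable_decayEnvelope {t : ℝ} (ht : 0 ≤ t) :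
    Summable fun n => (1 / 2 : ℝ) ^ (n + 1) * min (f n t) 1 :=
  .of_nonneg_of_le (fun n => by have := hf n t ht; positivity)
    (fun n => half_pow_succ_mul_min_le n _) (summable_geometric_two.mul_left _)

lemma le_decayEnvelope {t : ℝ} (ht : 0 ≤ t) (n : ℕ) :
    (1 / 2 : ℝ) ^ (n + 1) * min (f n t) 1 ≤ decayEnvelope f t :=
  (summable_decayEnvelope hf ht).le_tsum n fun m _ => by have := hf m t ht; positivity

lemma decayEnvelope_le_one {t : ℝ} (ht : 0 ≤ t) : decayEnvelope f t ≤ 1 := by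
  calc decayEnvelope f t ≤ ∑' n : ℕ, (1 / 2 : ℝ) * (1 / 2) ^ n :=
        (summable_decayEnvelope hf ht).tsum_le_tsum (fun n => half_pow_succ_mul_min_le n _)
          (summable_geometric_two.mul_left _)
    _ = 1 := by rw [tsum_mul_left, tsum_geometric_two]; norm_num

lemma decayEnvelope_pos {t : ℝ} (ht : 0 ≤ t) (h0 : 0 < f 0 t) : 0 < decayEnvelope f t :=
  (by positivity : (0:ℝ) < (1 / 2) ^ (0 + 1) * min (f 0 t) 1).trans_le (le_decayEnvelope hf ht 0)

lemma tendsto_decayEnvelope (hlim : ∀ n, Tendsto (f n) atTop (𝓝 0)) :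
    Tendsto (decayEnvelope f) atTop (𝓝 0) := by
  have h := tendsto_tsum_of_dominated_convergence (summable_geometric_two.mul_left (1 / 2 : ℝ))
    (fun n => ((hlim n).min tendsto_const_nhds).const_mul ((1 / 2 : ℝ) ^ (n + 1)))
    (by
      filter_upwards [eventually_ge_atTop 0] with t ht n
      have := hf n t ht
      have hterm : 0 ≤ (1 / 2 : ℝ) ^ (n + 1) * min (f n t) 1 := by positivity
      rw [Real.norm_of_nonneg hterm]
      exact half_pow_succ_mul_min_le n _)
  rwa [show ∑' n : ℕ, (1 / 2 : ℝ) ^ (n + 1) * min 0 1 = 0 by simp] at h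

lemma le_mul_decayEnvelope {n : ℕ} {t M : ℝ} (ht : 0 ≤ t) (hM : f n t ≤ M) :
    f n t ≤ 2 ^ (n + 1) * max 1 M * decayEnvelope f t := by
  have hmin : f n t ≤ max 1 M * min (f n t) 1 := by
    rcases le_total (f n t) 1 with h | h
    · rw [min_eq_left h]
      exact le_mul_of_one_le_left (hf n t ht) (le_max_left _ _)
    · rw [min_eq_right h, mul_one]
      exact hM.trans (le_max_right _ _)
  have henv : min (f n t) 1 ≤ 2 ^ (n + 1) * decayEnvelope f t := by
    have := le_decayEnvelope hf ht n
    rw [div_pow, one_pow] at this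
    rwa [div_mul_eq_mul_div, one_mul, div_le_iff₀' (by positivity)] at this
  calc f n t ≤ max 1 M * min (f n t) 1 := hmin
    _ ≤ max 1 M * (2 ^ (n + 1) * decayEnvelope f t) := by gcongr
    _ = 2 ^ (n + 1) * max 1 M * decayEnvelope f t := by ring

end decayEnvelope

theorem IsKLFun.exists_le_mul_decay {β : ℝ → ℝ → ℝ} (hβ : IsKLFun β) :
    ∃ ω a : ℝ → ℝ, (∀ t ≥ (0:ℝ), 0 < ω t ∧ ω t ≤ 1) ∧ Tendsto ω atTop (𝓝 0) ∧ Monotone a ∧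
      ∀ s ≥ (0:ℝ), ∀ t ≥ (0:ℝ), β s t ≤ a s * ω t := by
  set f : ℕ → ℝ → ℝ := fun n => β (n + 1)
  have hf : ∀ n, ∀ t ≥ (0:ℝ), 0 ≤ f n t := fun n t ht => hβ.nonneg (by positivity) ht
  refine ⟨decayEnvelope f, fun s => 2 ^ (⌈s⌉₊ + 1) * max 1 (β (⌈s⌉₊ + 1) 0),
    fun t ht => ⟨decayEnvelope_pos hf ht (by simpa [f] using hβ.pos one_pos ht),
      decayEnvelope_le_one hf ht⟩,
    tendsto_decayEnvelope hf fun n => (hβ.2 _ (by positivity)).2.2, fun s₁ s₂ h => ?_,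
    fun s hs t ht => ?_⟩
  · have hc := Nat.ceil_mono h
    have hβc : β (⌈s₁⌉₊ + 1) 0 ≤ β (⌈s₂⌉₊ + 1) 0 :=
      hβ.mono_left (by positivity) (by gcongr) le_rfl
    exact mul_le_mul (pow_le_pow_right₀ one_le_two (by omega)) (max_le_max le_rfl hβc)
      (by positivity) (by positivity)
  · calc β s t ≤ f ⌈s⌉₊ t := hβ.mono_left hs ((Nat.le_ceil s).trans (by linarith)) ht
      _ ≤ _ := le_mul_decayEnvelope hf ht (hβ.le_zero_right (by positivity) ht)

section MonotonePrimitive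

open MeasureTheory intervalIntegral

variable {g : ℝ → ℝ} (hg : Monotone g)
include hg

lemma Monotone.mul_le_intervalIntegral {x y : ℝ} (hxy : x ≤ y) :
    (y - x) * g x ≤ ∫ u in x..y, g u := by
  simpa using integral_mono_on hxy intervalIntegrable_const
    (hg.intervalIntegrable (μ := volume)) fun u hu => hg hu.1

lemma Monotone.intervalIntegral_le_mul {x y : ℝ} (hxy : x ≤ y) :
    ∫ u in x..y, g u ≤ (y - x) * g y := by
  simpa using integral_mono_on hxy (hg.intervalIntegrable (μ := volume))
    intervalIntegrable_const fun u hu => hg hu.2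

lemma Monotone.primitive_sub_primitive (x y : ℝ) :
    ((∫ u in (0:ℝ)..y, g u) - ∫ u in (0:ℝ)..x, g u) = ∫ u in x..y, g u :=
  integral_interval_sub_left hg.intervalIntegrable hg.intervalIntegrable

lemma Monotone.lipschitzWith_primitive (hg1 : ∀ x, |g x| ≤ 1) :
    LipschitzWith 1 fun x => ∫ u in (0:ℝ)..x, g u := by
  refine LipschitzWith.of_dist_le_mul fun x y => ?_
  rw [Real.dist_eq, Real.dist_eq, hg.primitive_sub_primitive, NNReal.coe_one, one_mul,
    ← Real.norm_eq_abs]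
  simpa using norm_integral_le_of_norm_le_const (a := y) (b := x) fun u _ =>
    (Real.norm_eq_abs _).trans_le (hg1 u)

variable (hg0 : ∀ x, 0 ≤ g x)
include hg0

lemma Monotone.monotone_primitive : Monotone fun x => ∫ u in (0:ℝ)..x, g u := fun x y hxy => by
  have := hg.primitive_sub_primitive x y
  have := integral_nonneg (μ := volume) hxy fun u _ => hg0 u
  simp only
  linarith

lemma Monotone.isKInfFun_primitive (hpos : ∀ x > 0, 0 < g x) :
    IsKInfFun fun x => ∫ u in (0:ℝ)..x, g u := by
  refine ⟨⟨(continuous_primitive (fun _ _ => hg.intervalIntegrable) 0).continuousOn,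
    fun x hx y hy hxy => ?_, integral_same⟩, ?_⟩
  · obtain ⟨m, hxm, hmy⟩ := exists_between hxy
    have hm : 0 < m := lt_of_le_of_lt hx hxm
    have h₁ := hg.primitive_sub_primitive x m
    have h₂ := hg.primitive_sub_primitive m y
    have h₃ := integral_nonneg (μ := volume) hxm.le fun u _ => hg0 u
    have h₄ := hg.mul_le_intervalIntegral hmy.le
    have h₅ : 0 < (y - m) * g m := mul_pos (by linarith) (hpos m hm)
    simp only
    linarith
  · have hlin : Tendsto (fun x => (x - 1) * g 1) atTop atTop :=
      (tendsto_atTop_add_const_right _ _ tendsto_id).atTop_mul_const (hpos 1 one_pos)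
    refine tendsto_atTop_mono' atTop ?_ hlin
    filter_upwards [eventually_ge_atTop 1] with x hx
    have := hg.primitive_sub_primitive 1 x
    have := hg.mul_le_intervalIntegral hx
    have := integral_nonneg (μ := volume) zero_le_one fun u _ => hg0 u
    linarith

end MonotonePrimitive

theorem Monotone.exists_continuous_monotone_majorant {A : ℝ → ℝ} (hA : Monotone A) :
    ∃ K : ℝ → ℝ, Continuous K ∧ Monotone K ∧ ∀ s, A s ≤ K s := by
  refine ⟨fun s => ∫ u in s..s + 1, A u, ?_, fun s₁ s₂ h => ?_, fun s => ?_⟩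
  · have hF := intervalIntegral.continuous_primitive
      (fun _ _ => hA.intervalIntegrable (μ := MeasureTheory.volume)) 0
    exact ((hF.comp (continuous_add_const 1)).sub hF).congr fun s =>
      hA.primitive_sub_primitive s (s + 1)
  · calc ∫ u in s₁..s₁ + 1, A u = ∫ u in s₂..s₂ + 1, A (u - (s₂ - s₁)) := by
          rw [intervalIntegral.integral_comp_sub_right]; ring_nf
      _ ≤ ∫ u in s₂..s₂ + 1, A u :=
          intervalIntegral.integral_mono_on (by linarith)
            (hA.comp fun _ _ h => sub_le_sub_right h _).intervalIntegrable
            hA.intervalIntegrable fun u _ => hA (by linarith)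
  · simpa using hA.mul_le_intervalIntegral (le_add_of_nonneg_right zero_le_one : s ≤ s + 1)

-- `sSup` makes this `0` when the set is empty or unbounded.
def exitTime (ω : ℝ → ℝ) (r : ℝ) : ℝ := sSup {t | 0 ≤ t ∧ r ≤ ω t}

section exitTime

variable {ω : ℝ → ℝ}

lemma exitTime_nonneg (r : ℝ) : 0 ≤ exitTime ω r :=
  Real.sSup_nonneg fun _ ht => ht.1

variable (hω : Tendsto ω atTop (𝓝 0))
include hω

lemma bddAbove_exitTime_set {r : ℝ} (hr : 0 < r) : BddAbove {t | 0 ≤ t ∧ r ≤ ω t} := by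
  obtain ⟨T, hT⟩ := eventually_atTop.mp (hω.eventually_lt_const hr)
  exact ⟨T, fun t ht => not_lt.mp fun hTt => (hT t hTt.le).not_ge ht.2⟩

lemma exitTime_antitoneOn : AntitoneOn (exitTime ω) (Ioi 0) := by
  intro r₁ hr₁ r₂ _ h
  rcases Set.eq_empty_or_nonempty {t | 0 ≤ t ∧ r₂ ≤ ω t} with he | hne
  · rw [exitTime, he, Real.sSup_empty]
    exact exitTime_nonneg r₁
  · exact csSup_le_csSup (bddAbove_exitTime_set hω hr₁) hne fun t ht => ⟨ht.1, h.trans ht.2⟩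

lemma le_exitTime {t : ℝ} (ht : 0 ≤ t) (hωt : 0 < ω t) : t ≤ exitTime ω (ω t) :=
  le_csSup (bddAbove_exitTime_set hω hωt) ⟨ht, le_rfl⟩

end exitTime

lemma ciInf_pos_of_eventually_ge {f : ℕ → ℝ} (hpos : ∀ n, 0 < f n) {c : ℝ} (hc : 0 < c)
    (hev : ∀ᶠ n in atTop, c ≤ f n) : 0 < ⨅ n, f n := by
  obtain ⟨N, hN⟩ := eventually_atTop.mp hev
  have hmin : 0 < min c ((Finset.range (N + 1)).inf' Finset.nonempty_range_add_one f) :=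
    lt_min hc ((Finset.lt_inf'_iff _).2 fun n _ => hpos n)
  refine hmin.trans_le (le_ciInf fun n => ?_)
  rcases le_or_gt N n with h | h
  · exact (min_le_left _ _).trans (hN n h)
  · exact (min_le_right _ _).trans (Finset.inf'_le _ (Finset.mem_range.2 (by omega)))

section exitDensity

variable (ω : ℝ → ℝ) (lam : ℝ)

def exitWeight (n : ℕ) : ℝ := Real.exp (lam * exitTime ω (1 / ((n : ℝ) + 1) ^ 2))

/- The weight `exitWeight ω lam n` makes the `n`-th term at least `1` once `u ≥ 1 / (n + 1)`,
so the infimum is positive for `u > 0`. -/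
def exitDensity (u : ℝ) : ℝ :=
  if 0 < u then
    min 1 (⨅ n : ℕ, exitWeight ω lam n * Real.exp (-(lam * exitTime ω (u / ((n : ℝ) + 1)))))
  else 0

variable {ω lam}

lemma exitWeight_pos (n : ℕ) : 0 < exitWeight ω lam n := Real.exp_pos _

lemma exitDensity_term_pos (n : ℕ) (u : ℝ) :
    0 < exitWeight ω lam n * Real.exp (-(lam * exitTime ω (u / ((n : ℝ) + 1)))) :=
  mul_pos (exitWeight_pos n) (Real.exp_pos _)

lemma bddBelow_exitDensity_terms (u : ℝ) :
    BddBelow (range fun n : ℕ =>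
      exitWeight ω lam n * Real.exp (-(lam * exitTime ω (u / ((n : ℝ) + 1))))) :=
  ⟨0, forall_mem_range.2 fun n => (exitDensity_term_pos n u).le⟩

lemma exitDensity_nonneg (u : ℝ) : 0 ≤ exitDensity ω lam u := by
  unfold exitDensity
  split_ifs
  · exact le_min zero_le_one (le_ciInf fun n => (exitDensity_term_pos n u).le)
  · exact le_rfl

lemma abs_exitDensity_le_one (u : ℝ) : |exitDensity ω lam u| ≤ 1 := by
  rw [abs_of_nonneg (exitDensity_nonneg u), exitDensity]
  split_ifs
  · exact min_le_left _ _
  · exact zero_le_one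

lemma exitDensity_le {u : ℝ} (hu : 0 < u) (n : ℕ) :
    exitDensity ω lam u ≤
      exitWeight ω lam n * Real.exp (-(lam * exitTime ω (u / ((n : ℝ) + 1)))) := by
  rw [exitDensity, if_pos hu]
  exact (min_le_right _ _).trans (ciInf_le (bddBelow_exitDensity_terms u) n)

variable (hω : Tendsto ω atTop (𝓝 0)) (hlam : 0 ≤ lam)
include hω hlam

lemma monotone_exitDensity : Monotone (exitDensity ω lam) := by
  intro u v huv
  by_cases hu : 0 < u
  · have hv := hu.trans_le huv
    rw [exitDensity, exitDensity, if_pos hu, if_pos hv]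
    refine min_le_min le_rfl (ciInf_mono (bddBelow_exitDensity_terms u) fun n => ?_)
    have hT := exitTime_antitoneOn hω (by positivity : (0:ℝ) < u / ((n : ℝ) + 1))
      (by positivity : (0:ℝ) < v / ((n : ℝ) + 1)) (by gcongr)
    exact mul_le_mul_of_nonneg_left (by gcongr) (exitWeight_pos n).le
  · rw [exitDensity, if_neg hu]
    exact exitDensity_nonneg v

lemma exitDensity_pos {u : ℝ} (hu : 0 < u) : 0 < exitDensity ω lam u := by
  rw [exitDensity, if_pos hu]
  refine lt_min one_pos (ciInf_pos_of_eventually_ge (exitDensity_term_pos · u) one_pos ?_)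
  filter_upwards [eventually_ge_atTop ⌈u⁻¹⌉₊] with n hn
  have hun : 1 ≤ u * ((n : ℝ) + 1) := by
    have := (Nat.ceil_le.mp hn).trans (le_add_of_nonneg_right zero_le_one : (n : ℝ) ≤ n + 1)
    rwa [inv_le_iff_one_le_mul₀' hu] at this
  have harg : 1 / ((n : ℝ) + 1) ^ 2 ≤ u / ((n : ℝ) + 1) := by
    rw [div_le_div_iff₀ (by positivity) (by positivity)]
    nlinarith
  have hT := exitTime_antitoneOn hω (by positivity : (0:ℝ) < 1 / ((n : ℝ) + 1) ^ 2)
    (by positivity : (0:ℝ) < u / ((n : ℝ) + 1)) harg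
  rw [exitWeight, ← Real.exp_add]
  exact Real.one_le_exp (by nlinarith [mul_le_mul_of_nonneg_left hT hlam])

lemma exitWeight_monotone : Monotone (exitWeight ω lam) := by
  intro n m hnm
  have hT := exitTime_antitoneOn hω (by positivity : (0:ℝ) < 1 / ((m : ℝ) + 1) ^ 2)
    (by positivity : (0:ℝ) < 1 / ((n : ℝ) + 1) ^ 2) (by gcongr)
  unfold exitWeight
  gcongr

end exitDensity

section primitiveExitDensity

variable {ω : ℝ → ℝ} (hω : ∀ t ≥ (0:ℝ), 0 < ω t ∧ ω t ≤ 1) (hω0 : Tendsto ω atTop (𝓝 0))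
  {lam : ℝ} (hlam : 0 ≤ lam)
include hω hω0 hlam

lemma primitive_exitDensity_le (n : ℕ) {t : ℝ} (ht : 0 ≤ t) :
    ∫ u in (0:ℝ)..((n : ℝ) + 1) * ω t, exitDensity ω lam u ≤
      ((n : ℝ) + 1) * exitWeight ω lam n * Real.exp (-lam * t) := by
  obtain ⟨hωt, hωt1⟩ := hω t ht
  have hx : 0 < ((n : ℝ) + 1) * ω t := by positivity
  have hexp : Real.exp (-(lam * exitTime ω (ω t))) ≤ Real.exp (-lam * t) := by
    rw [neg_mul, Real.exp_le_exp, neg_le_neg_iff]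
    exact mul_le_mul_of_nonneg_left (le_exitTime hω0 ht hωt) hlam
  calc ∫ u in (0:ℝ)..((n : ℝ) + 1) * ω t, exitDensity ω lam u
      ≤ (((n : ℝ) + 1) * ω t - 0) * exitDensity ω lam (((n : ℝ) + 1) * ω t) :=
        (monotone_exitDensity hω0 hlam).intervalIntegral_le_mul hx.le
    _ ≤ ((n : ℝ) + 1) * ω t * (exitWeight ω lam n * Real.exp (-(lam * exitTime ω (ω t)))) := by
        rw [sub_zero]
        refine mul_le_mul_of_nonneg_left ?_ hx.le
        simpa [mul_div_cancel_left₀ _ (by positivity : (n : ℝ) + 1 ≠ 0)] using exitDensity_le hx n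
    _ ≤ ((n : ℝ) + 1) * 1 * (exitWeight ω lam n * Real.exp (-lam * t)) := by
        have := exitWeight_pos (ω := ω) (lam := lam) n
        gcongr
    _ = ((n : ℝ) + 1) * exitWeight ω lam n * Real.exp (-lam * t) := by ring

theorem exists_isKInfFun_mul_decay_le :
    ∃ φ C : ℝ → ℝ, IsKInfFun φ ∧ LipschitzWith 1 φ ∧ Monotone φ ∧ Monotone C ∧
      (∀ c, 0 ≤ C c) ∧ ∀ c, ∀ t ≥ (0:ℝ), φ (c * ω t) ≤ C c * Real.exp (-lam * t) := by
  have hH := monotone_exitDensity hω0 hlam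
  refine ⟨fun x => ∫ u in (0:ℝ)..x, exitDensity ω lam u,
    fun c => ((⌈c⌉₊ : ℝ) + 1) * exitWeight ω lam ⌈c⌉₊,
    hH.isKInfFun_primitive exitDensity_nonneg fun u => exitDensity_pos hω0 hlam,
    hH.lipschitzWith_primitive abs_exitDensity_le_one, hH.monotone_primitive exitDensity_nonneg,
    fun c₁ c₂ h => ?_, fun c => mul_nonneg (by positivity) (exitWeight_pos _).le, fun c t ht => ?_⟩
  · have := exitWeight_monotone hω0 hlam (Nat.ceil_mono h)
    exact mul_le_mul (by gcongr) this (exitWeight_pos _).le (by positivity)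
  · refine le_trans (hH.monotone_primitive exitDensity_nonneg ?_)
      (primitive_exitDensity_le hω hω0 hlam ⌈c⌉₊ ht)
    exact mul_le_mul_of_nonneg_right ((Nat.le_ceil c).trans (by linarith)) (hω t ht).1.le

end primitiveExitDensity

/-- Sontag's lemma on 𝒦𝓛-estimates: for any 𝒦𝓛 function `β` and `λ ≥ 0`
there exist `φ₁, φ₂ ∈ 𝒦∞` with `φ₁` locally Lipschitz such that
`φ₁(β(s,t)) ≤ φ₂(s) e^{−λ t}` for all `s, t ≥ 0`. -/
theorem stmt8 (β : ℝ → ℝ → ℝ) (hβ : IsKLFun β) (lam : ℝ) (hlam : 0 ≤ lam) :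
    ∃ φ₁ φ₂ : ℝ → ℝ, IsKInfFun φ₁ ∧ IsKInfFun φ₂ ∧ LocallyLipschitz φ₁ ∧
      ∀ s ≥ (0:ℝ), ∀ t ≥ (0:ℝ), φ₁ (β s t) ≤ φ₂ s * Real.exp (-lam * t) := by
  obtain ⟨ω, a, hω, hω0, ha, hβa⟩ := hβ.exists_le_mul_decay
  obtain ⟨φ, C, hφ, hφlip, hφmono, hC, hC0, hφC⟩ := exists_isKInfFun_mul_decay_le hω hω0 hlam
  obtain ⟨K, hKc, hKm, hCK⟩ := (hC.comp ha).exists_continuous_monotone_majorant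
  have hK0 : ∀ s, 0 ≤ K s := fun s => (hC0 _).trans (hCK s)
  refine ⟨fun x => φ x * φ x, fun s => φ (β s 0) * K s + s, hφ.mul_self,
    isKInfFun_mul_add_id (hφ.1.comp (hβ.1 0 le_rfl)) hKc.continuousOn (hKm.monotoneOn _)
      fun s _ => hK0 s,
    ((contDiff_id (𝕜 := ℝ)).mul contDiff_id).locallyLipschitz.comp hφlip.locallyLipschitz, ?_⟩
  intro s hs t ht
  have hdecay : φ (β s t) ≤ K s * Real.exp (-lam * t) :=
    calc φ (β s t) ≤ φ (a s * ω t) := hφmono (hβa s hs t ht)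
      _ ≤ C (a s) * Real.exp (-lam * t) := hφC _ t ht
      _ ≤ K s * Real.exp (-lam * t) := by gcongr; exact hCK s
  have hinit : φ (β s t) ≤ φ (β s 0) := hφmono (hβ.le_zero_right hs ht)
  have hφβ : 0 ≤ φ (β s t) := hφ.1.nonneg (hβ.nonneg hs ht)
  calc φ (β s t) * φ (β s t) ≤ φ (β s 0) * (K s * Real.exp (-lam * t)) :=
        mul_le_mul hinit hdecay hφβ (hφβ.trans hinit)
    _ ≤ (φ (β s 0) * K s + s) * Real.exp (-lam * t) := by
        rw [← mul_assoc]
        gcongr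
        linarith
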